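/- arXiv:2109.02564 — 4 statements merged into one kernel-verified Lean document; each statement's English description precedes it below -/
import Mathlib

section
/- For integers 0 ≤ i ≤ d, the quantities p(i,d) := (i+1)! · C(d,i) · (1/(d+1))^(i+1) form a probability distribution: the sum over i from 0 to d of (i+1)!·C(d,i)·(1/(d+1))^(i+1) equals 1. -/
/-! Writing `a i = d.descFactorial i / (d + 1) ^ i`, the `i`-th summand equals `a i - a (i + 1)`,
so the sum telescopes to `a 0 - a (d + 1) = 1 - 0`. -/

theorem Nat.factorial_succ_mul_choose (d i : ℕ) :
    (i + 1).factorial * d.choose i = (i + 1) * d.descFactorial i := by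
  rw [Nat.factorial_succ, Nat.descFactorial_eq_factorial_mul_choose, mul_assoc]

theorem Nat.descFactorial_mul_pow_sub_succ (d i : ℕ) {x : ℝ} (hx : x * (d + 1) = 1) :
    (d.descFactorial i : ℝ) * x ^ i - d.descFactorial (i + 1) * x ^ (i + 1)
      = (i + 1) * d.descFactorial i * x ^ (i + 1) := by
  rcases le_or_gt i d with hid | hdi
  · rw [Nat.descFactorial_succ, Nat.cast_mul, Nat.cast_sub hid]
    linear_combination -(d.descFactorial i : ℝ) * x ^ i * hx
  · simp [Nat.descFactorial_of_lt hdi]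

theorem stmt0 (d : ℕ) :
    ∑ i ∈ Finset.range (d + 1),
      (Nat.factorial (i + 1) : ℝ) * (d.choose i : ℝ) * (1 / ((d : ℝ) + 1)) ^ (i + 1) = 1 := by
  have hx : 1 / ((d : ℝ) + 1) * (d + 1) = 1 := one_div_mul_cancel (by positivity)
  have hsummand : ∀ i, (Nat.factorial (i + 1) : ℝ) * d.choose i * (1 / ((d : ℝ) + 1)) ^ (i + 1)
      = d.descFactorial i * (1 / ((d : ℝ) + 1)) ^ i
        - d.descFactorial (i + 1) * (1 / ((d : ℝ) + 1)) ^ (i + 1) := fun i => by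
    rw [Nat.descFactorial_mul_pow_sub_succ d i hx, ← Nat.cast_mul, Nat.factorial_succ_mul_choose]
    push_cast; ring
  simp only [hsummand, Finset.sum_range_sub', Nat.descFactorial_of_lt d.lt_succ_self]
  simp
end

section
/- The sequence μ(d) := d!·∑_{j=1}^{d} 1/((d+1)^j·(d-j)!) is strictly increasing in d for d ≥ 1, and μ(d) > 1 for all d ≥ 3. -/
/-- The mean number of new spreaders one spreader with `d` ignorant neighbors generates:
`μ(d) = d! · ∑_{j=1}^{d} 1/((d+1)^j · (d-j)!)`. -/
noncomputable def mtMu (d : ℕ) : ℝ :=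
  (Nat.factorial d : ℝ) *
    ∑ j ∈ Finset.Icc 1 d, 1 / (((d : ℝ) + 1) ^ j * (Nat.factorial (d - j) : ℝ))

/-!
The `j`-th term of `μ(d)` is `d.descFactorial j / (d+1)^j = ∏_{i<j} (d-i)/(d+1)`, and each factor
grows strictly with `d`, since `(d-i)(d+2) < (d+1-i)(d+1)`. So every term of `μ(d)` is smaller than
the corresponding term of `μ(d+1)`, which moreover has one more positive term. Finally
`μ(3) = 3/4 + 3/8 + 3/32 = 39/32 > 1`.
-/

open Finset

lemma mtMu_eq_sum_descFactorial_div_pow (d : ℕ) :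
    mtMu d = ∑ j ∈ Icc 1 d, (d.descFactorial j : ℝ) / ((d : ℝ) + 1) ^ j := by
  rw [mtMu, mul_sum]
  refine sum_congr rfl fun j hj => ?_
  rw [← Nat.factorial_mul_descFactorial (mem_Icc.1 hj).2]
  push_cast
  field_simp

lemma descFactorial_div_pow_eq_prod {K : Type*} [Field K] (n k : ℕ) (x : K) :
    (n.descFactorial k : K) / x ^ k = ∏ i ∈ range k, ((n - i : ℕ) : K) / x := by
  rw [Nat.descFactorial_eq_prod_range, prod_div_distrib, prod_const, card_range]
  push_cast
  rfl

lemma sub_div_add_one_lt_succ {d i : ℕ} (hi : i ≤ d) :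
    ((d - i : ℕ) : ℝ) / ((d : ℝ) + 1) < ((d + 1 - i : ℕ) : ℝ) / (((d + 1 : ℕ) : ℝ) + 1) := by
  rw [Nat.cast_sub hi, Nat.cast_sub (by omega), div_lt_div_iff₀ (by positivity) (by positivity)]
  push_cast
  nlinarith

lemma descFactorial_div_pow_lt_succ {d j : ℕ} (hj : 1 ≤ j) (hjd : j ≤ d) :
    (d.descFactorial j : ℝ) / ((d : ℝ) + 1) ^ j <
      ((d + 1).descFactorial j : ℝ) / (((d + 1 : ℕ) : ℝ) + 1) ^ j := by
  rw [descFactorial_div_pow_eq_prod, descFactorial_div_pow_eq_prod]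
  refine prod_lt_prod_of_nonempty (fun i hi => ?_) (fun i hi => ?_) (nonempty_range_iff.2 (by omega))
  · have : (0 : ℝ) < (d - i : ℕ) := by
      exact_mod_cast Nat.sub_pos_of_lt ((mem_range.1 hi).trans_le hjd)
    positivity
  · exact sub_div_add_one_lt_succ ((mem_range.1 hi).le.trans hjd)

lemma mtMu_lt_mtMu_succ {d : ℕ} (hd : 1 ≤ d) : mtMu d < mtMu (d + 1) := by
  rw [mtMu_eq_sum_descFactorial_div_pow, mtMu_eq_sum_descFactorial_div_pow]
  calc ∑ j ∈ Icc 1 d, (d.descFactorial j : ℝ) / ((d : ℝ) + 1) ^ j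
      < ∑ j ∈ Icc 1 d, ((d + 1).descFactorial j : ℝ) / (((d + 1 : ℕ) : ℝ) + 1) ^ j :=
        sum_lt_sum_of_nonempty ⟨1, mem_Icc.2 ⟨le_rfl, hd⟩⟩
          fun j hj => descFactorial_div_pow_lt_succ (mem_Icc.1 hj).1 (mem_Icc.1 hj).2
    _ ≤ ∑ j ∈ Icc 1 (d + 1), ((d + 1).descFactorial j : ℝ) / (((d + 1 : ℕ) : ℝ) + 1) ^ j :=
        sum_le_sum_of_subset_of_nonneg (Icc_subset_Icc_right d.le_succ)
          fun _ _ _ => by positivity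

lemma mtMu_three : mtMu 3 = 39 / 32 := by
  rw [mtMu_eq_sum_descFactorial_div_pow]
  norm_num [sum_Icc_succ_top, Nat.descFactorial]

theorem stmt5 :
    (∀ d : ℕ, 1 ≤ d → mtMu d < mtMu (d + 1)) ∧ (∀ d : ℕ, 3 ≤ d → 1 < mtMu d) := by
  refine ⟨fun d hd => mtMu_lt_mtMu_succ hd, fun d hd => ?_⟩
  induction d, hd using Nat.le_induction with
  | base => rw [mtMu_three]; norm_num
  | succ n hn ih => exact ih.trans (mtMu_lt_mtMu_succ (by omega))
end

section
/- For ξ ~ Binomial(3,p), the mean number of spreaders one spreader generates equals μ(p) = p·(5p^2 − 32p + 144)/96. -/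
open Finset Nat

/-- The conditional mean `E(X | ξ = d)` of the number of spreaders generated by one spreader
that has `d` contacts. -/
noncomputable def condMeanSpreaders (d : ℕ) : ℝ :=
  d ! * ∑ j ∈ Icc 1 d, 1 / (((d : ℝ) + 1) ^ j * ((d - j) ! : ℝ))

theorem condMeanSpreaders_one : condMeanSpreaders 1 = 1 / 2 := by
  norm_num [condMeanSpreaders]

theorem condMeanSpreaders_two : condMeanSpreaders 2 = 8 / 9 := by
  norm_num [condMeanSpreaders, sum_Icc_succ_top, factorial]

-- `3! · (1/(4·2!) + 1/(4²·1!) + 1/4³) = 6 · 13/64`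
theorem condMeanSpreaders_three : condMeanSpreaders 3 = 39 / 32 := by
  norm_num [condMeanSpreaders, sum_Icc_succ_top, factorial]

theorem stmt9_general (p : ℝ) :
    ∑ d ∈ Finset.Icc 1 3,
        ((Nat.factorial d : ℝ) *
            ∑ j ∈ Finset.Icc 1 d, 1 / (((d : ℝ) + 1) ^ j * (Nat.factorial (d - j) : ℝ))) *
          ((Nat.choose 3 d : ℝ) * p ^ d * (1 - p) ^ (3 - d)) =
      p * (5 * p ^ 2 - 32 * p + 144) / 96 := by
  change ∑ d ∈ Icc 1 3, condMeanSpreaders d * ((choose 3 d : ℝ) * p ^ d * (1 - p) ^ (3 - d)) = _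
  rw [sum_Icc_succ_top (by norm_num), sum_Icc_succ_top (by norm_num), Icc_self, sum_singleton,
    condMeanSpreaders_one, condMeanSpreaders_two, condMeanSpreaders_three]
  norm_num
  ring

theorem stmt9 (p : ℝ) (hp0 : 0 ≤ p) (hp1 : p ≤ 1) :
    ∑ d ∈ Finset.Icc 1 3,
        ((Nat.factorial d : ℝ) *
            ∑ j ∈ Finset.Icc 1 d, 1 / (((d : ℝ) + 1) ^ j * (Nat.factorial (d - j) : ℝ))) *
          ((Nat.choose 3 d : ℝ) * p ^ d * (1 - p) ^ (3 - d)) =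
      p * (5 * p ^ 2 - 32 * p + 144) / 96 :=
  stmt9_general p
end

section
/- The function θ(p) := (−5p^2 + 32p − 2√(p(−5p^3 − 8p^2 − 68p + 216)))/(9p^2) attains its maximum over p ∈ (0,1] at p = 1, with maximum value 3 − (2/3)√15 ≈ 0.418. -/
/-- Survival probability of the Maki–Thompson rumor on a Galton–Watson tree with
`Binomial(3,p)` offspring, in the supercritical regime. -/
noncomputable def thetaB3 (p : ℝ) : ℝ :=
  (-5 * p ^ 2 + 32 * p - 2 * Real.sqrt (p * (-5 * p ^ 3 - 8 * p ^ 2 - 68 * p + 216))) / (9 * p ^ 2)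

theorem stmt12 :
    (∀ p ∈ Set.Ioc (0 : ℝ) 1, thetaB3 p ≤ thetaB3 1) ∧
      thetaB3 1 = 3 - (2 / 3) * Real.sqrt 15 := by
  have hs0 : (0:ℝ) ≤ Real.sqrt 15 := Real.sqrt_nonneg _
  have hs2 : (Real.sqrt 15)^2 = 15 := Real.sq_sqrt (by norm_num)
  set s := Real.sqrt 15 with hs
  have hθ1 : thetaB3 1 = 3 - (2/3) * s := by
    have h135 : Real.sqrt ((1:ℝ) * (-5 * 1 ^ 3 - 8 * 1 ^ 2 - 68 * 1 + 216)) = 3 * s := by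
      rw [show (1:ℝ) * (-5 * 1 ^ 3 - 8 * 1 ^ 2 - 68 * 1 + 216) = 3^2 * 15 by norm_num,
        Real.sqrt_mul (by positivity), hs, Real.sqrt_sq (by norm_num)]
    unfold thetaB3
    rw [h135]; ring
  refine ⟨fun p hp => ?_, hθ1⟩
  obtain ⟨hp0, hp1⟩ := hp
  rw [hθ1]
  set q := p * (-5 * p ^ 3 - 8 * p ^ 2 - 68 * p + 216) with hq
  have hL0 : 0 ≤ 16*p - 16*p^2 + 3*s*p^2 := by
    nlinarith [mul_nonneg hp0.le (by linarith : (0:ℝ) ≤ 1 - p),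
      mul_nonneg (mul_nonneg hs0 hp0.le) hp0.le]
  have ha : 0 ≤ 396 - 96*s := by nlinarith [sq_nonneg (s - 4)]
  have hg : 0 ≤ (396 - 96*s)*p^2 - 108*p + 216 := by
    nlinarith [mul_nonneg ha (sq_nonneg p)]
  have key : q - (16*p - 16*p^2 + 3*s*p^2)^2
      = p*(1-p)*((396 - 96*s)*p^2 - 108*p + 216) := by
    rw [hq]; linear_combination (-9*p^4) * hs2
  have hL2 : (16*p - 16*p^2 + 3*s*p^2)^2 ≤ q := by
    nlinarith [mul_nonneg (mul_nonneg hp0.le (by linarith : (0:ℝ) ≤ 1 - p)) hg, key]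
  have hLs : 16*p - 16*p^2 + 3*s*p^2 ≤ Real.sqrt q := (Real.le_sqrt hL0 ((sq_nonneg _).trans hL2)).mpr hL2
  unfold thetaB3
  rw [div_le_iff₀ (by positivity)]
  nlinarith [hLs]
end
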